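/- arXiv:2501.00809 — 2 statements merged into one kernel-verified Lean document; each statement's English description precedes it below -/
import Mathlib

section
/- Fix an integer m ≥ 2 and an integer w with 3(m−1) ≤ w ≤ 6m−9. If φ̂ : 𝓡^▭_w → 𝓜^▭_w is a bijection whose multiset of multipliers equals the multiset of multipliers of φ^▭ restricted to 𝓡^▭_w, then φ̂ coincides with φ^▭ on 𝓡^▭_w. -/
open Finset

abbrev V : Type := ℤ × ℤ × ℤ

/-- weight of a monomial `(a,b,c)`, i.e. `a + 2b + 3c` -/
def wtR (u : V) : ℤ := u.1 + 2 * u.2.1 + 3 * u.2.2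

/-- the `𝓜`-weight of `(i,j,k)`, i.e. `i + 2j + 3k - 3m` -/
def wtM (m : ℤ) (v : V) : ℤ := v.1 + 2 * v.2.1 + 3 * v.2.2 - 3 * m

/-- `t_𝓡 (a,b,c) = ⌊c/2⌋` -/
def tR (u : V) : ℤ := u.2.2 / 2

/-- `t_𝓜 (i,j,k) = ⌊(3(m-1)-i-j)/3⌋` -/
def tM (m : ℤ) (v : V) : ℤ := (3 * (m - 1) - v.1 - v.2.1) / 3

/-- the threshold number `τ_w = ⌊w/3⌋ - (m-1)` -/
def tauW (m w : ℤ) : ℤ := w / 3 - (m - 1)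

/-- `δ_w = 6m - 9 - w` -/
def deltaW (m w : ℤ) : ℤ := 6 * m - 9 - w

/-- `ε(n)`: residue of `n` mod 2, in `{0,1}` -/
def epsZ (n : ℤ) : ℤ := n % 2

/-- `η(n)`: residue of `n` mod 3, in `{0,1,2}` -/
def etaZ (n : ℤ) : ℤ := n % 3

/-- `ρ(n)`: the representative of `n` mod 6 lying in `{-6,-4,-3,-2,-1,1}` -/
def rhoZ (n : ℤ) : ℤ := if n % 6 = 1 then 1 else n % 6 - 6

/-- `λ(n) = (n - ρ(n))/6` -/
def lamZ (n : ℤ) : ℤ := (n - rhoZ n) / 6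

/-- `q_h = (0, 3h, m - 2h)` -/
def qvec (m h : ℤ) : V := (0, 3 * h, m - 2 * h)

def e1v : V := (1, 1, -1)

def e2v : V := (0, 3, -2)

/-- `u` has non-negative coordinates (i.e. `u ∈ ℕ³`) -/
def nonnegV (u : V) : Prop := 0 ≤ u.1 ∧ 0 ≤ u.2.1 ∧ 0 ≤ u.2.2

/-- `𝓡 = {(a,b,c) ∈ ℕ³ : a + b ≤ 3(m-1)}` -/
def Rfull (m : ℤ) : Set V := {u | nonnegV u ∧ u.1 + u.2.1 ≤ 3 * (m - 1)}

/-- `𝓜 = {(i,j,k) ∈ ℕ³ : i + j ≤ 3(m-1), i + j + k ≥ 3m - 2}` -/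
def Mfull (m : ℤ) : Set V :=
  {v | nonnegV v ∧ v.1 + v.2.1 ≤ 3 * (m - 1) ∧ 3 * m - 2 ≤ v.1 + v.2.1 + v.2.2}

/-- `𝓡' = {(a,b,c) ∈ ℕ³ : 2a + 2b + 3c ≤ 6m - 9}` -/
def Rprime (m : ℤ) : Set V := {u | nonnegV u ∧ 2 * u.1 + 2 * u.2.1 + 3 * u.2.2 ≤ 6 * m - 9}

/-- `𝓜' = {(i,j,k) ∈ ℕ³ : 2i+2j+3k ≤ 9(m-1), i+j ≤ 3(m-1), i+j+k ≥ 3m-2}` -/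
def Mprime (m : ℤ) : Set V :=
  {v | nonnegV v ∧ 2 * v.1 + 2 * v.2.1 + 3 * v.2.2 ≤ 9 * (m - 1) ∧
    v.1 + v.2.1 ≤ 3 * (m - 1) ∧ 3 * m - 2 ≤ v.1 + v.2.1 + v.2.2}

/-- the rectangular region `𝓡^▭` -/
def Rrect (m : ℤ) : Set V := {u ∈ Rprime m | tR u ≤ tauW m (wtR u)}

/-- the rectangular region `𝓜^▭` -/
def Mrect (m : ℤ) : Set V := {v ∈ Mprime m | tM m v ≤ tauW m (wtM m v)}

/-- the triangular region `𝓡^△ = 𝓡' ∖ 𝓡^▭` -/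
def Rtri (m : ℤ) : Set V := {u ∈ Rprime m | tauW m (wtR u) + 1 ≤ tR u}

/-- the triangular region `𝓜^△ = 𝓜' ∖ 𝓜^▭` -/
def Mtri (m : ℤ) : Set V := {v ∈ Mprime m | tauW m (wtM m v) + 1 ≤ tM m v}

/-- the extended triangular region `𝓡^T` -/
def RText (m : ℤ) : Set V := {u | nonnegV u ∧ tauW m (wtR u) + 1 ≤ tR u}

/-- the extended triangular region `𝓜^T` -/
def MText (m : ℤ) : Set V := {v ∈ Mfull m | tauW m (wtM m v) + 1 ≤ tM m v}

/-- the bijection `φ^▭ (u) = u + q_{λ(u)}` on the rectangular region -/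
def phiRect (m : ℤ) (u : V) : V := u + qvec m (lamZ (deltaW m (wtR u) - u.1))

/-- the parametrization `u^△ (w,r,s)` of the extended triangular region `𝓡^T` -/
def uTri (d : V) : V :=
  (3 * d.2.2 + etaZ (d.1 + d.2.1), d.2.1,
    (d.1 - 2 * d.2.1 - 3 * d.2.2 - etaZ (d.1 + d.2.1)) / 3)

/-- the parametrization `v^△ (w,r,s)` of the extended triangular region `𝓜^T` -/
def vTri (m : ℤ) (d : V) : V :=
  ((6 * (m - 1) - d.1 - 2 * d.2.1 + 3 * d.2.2 - epsZ (d.1 + d.2.2)) / 2,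
    2 * d.2.1 + epsZ (d.1 + d.2.2),
    (d.1 - 2 * d.2.1 - d.2.2 + 2 - epsZ (d.1 + d.2.2)) / 2)

/-- `𝓓 = {(w,r,s) ∈ ℕ³ : 2r + 3s ≤ w}` -/
def Dall : Set V := {d | nonnegV d ∧ 2 * d.2.1 + 3 * d.2.2 ≤ d.1}

/-- `t_𝓓 (w,r,s) = ⌊(w - 2r - 3s)/6⌋` -/
def tD (d : V) : ℤ := (d.1 - 2 * d.2.1 - 3 * d.2.2) / 6

/-- `𝓓^T = {d ∈ 𝓓 : t_𝓓(d) ≥ τ_w + 1}` -/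
def DText (m : ℤ) : Set V := {d ∈ Dall | tauW m d.1 + 1 ≤ tD d}

/-- explicit formula for `φ^△ = v^△ ∘ (u^△)⁻¹`: for `u = (a,b,c) ∈ 𝓡^T` the unique
`(w,r,s) ∈ 𝓓^T` with `u^△(w,r,s) = u` is `(wt(u), b, ⌊a/3⌋)`. -/
def phiTri (m : ℤ) (u : V) : V := vTri m (wtR u, u.2.1, u.1 / 3)

/-- the glued bijection `φ`: `φ^▭` on `𝓡^▭` and `φ^△` on `𝓡^△` -/
def phiW (m : ℤ) (u : V) : V :=
  if tR u ≤ tauW m (wtR u) then phiRect m u else phiTri m u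

noncomputable def boxF (N : ℤ) : Finset V := Finset.Icc 0 N ×ˢ (Finset.Icc 0 N ×ˢ Finset.Icc 0 N)

/-- `𝓡_w` as a finset -/
noncomputable def RfullWF (m w : ℤ) : Finset V :=
  (boxF w).filter fun u => u.1 + u.2.1 ≤ 3 * (m - 1) ∧ wtR u = w

/-- `𝓜_w` as a finset -/
noncomputable def MfullWF (m w : ℤ) : Finset V :=
  (boxF (w + 3 * m)).filter fun v =>
    v.1 + v.2.1 ≤ 3 * (m - 1) ∧ 3 * m - 2 ≤ v.1 + v.2.1 + v.2.2 ∧ wtM m v = w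

/-- `𝓡'_w` as a finset -/
noncomputable def RprimeWF (m w : ℤ) : Finset V :=
  (boxF w).filter fun u => 2 * u.1 + 2 * u.2.1 + 3 * u.2.2 ≤ 6 * m - 9 ∧ wtR u = w

/-- `𝓜'_w` as a finset -/
noncomputable def MprimeWF (m w : ℤ) : Finset V :=
  (boxF (w + 3 * m)).filter fun v =>
    2 * v.1 + 2 * v.2.1 + 3 * v.2.2 ≤ 9 * (m - 1) ∧ v.1 + v.2.1 ≤ 3 * (m - 1) ∧
      3 * m - 2 ≤ v.1 + v.2.1 + v.2.2 ∧ wtM m v = w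

/-- `𝓡^▭_w` as a finset -/
noncomputable def RrectWF (m w : ℤ) : Finset V := (RprimeWF m w).filter fun u => tR u ≤ tauW m w

/-- `𝓜^▭_w` as a finset -/
noncomputable def MrectWF (m w : ℤ) : Finset V := (MprimeWF m w).filter fun v => tM m v ≤ tauW m w

/-- `𝓡^△_w` as a finset -/
noncomputable def RtriWF (m w : ℤ) : Finset V := (RprimeWF m w).filter fun u => tauW m w + 1 ≤ tR u

/-- `𝓜^△_w` as a finset -/
noncomputable def MtriWF (m w : ℤ) : Finset V := (MprimeWF m w).filter fun v => tauW m w + 1 ≤ tM m v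

/-- `λ(u) = λ(δ_w - a(u))` -/
def lamU (m w : ℤ) (u : V) : ℤ := lamZ (deltaW m w - u.1)

/-- the order `≺` on `𝓡^▭_w` -/
def precR (m w : ℤ) (u u' : V) : Prop :=
  lamU m w u < lamU m w u' ∨
    (lamU m w u = lamU m w u' ∧ u'.1 < u.1) ∨
      (lamU m w u = lamU m w u' ∧ u.1 = u'.1 ∧ tR u < tR u')

/-- the order `≺` on `𝓜^▭_w` -/
def precM (m w : ℤ) (v v' : V) : Prop :=
  lamU m w v < lamU m w v' ∨
    (lamU m w v = lamU m w v' ∧ v'.1 < v.1) ∨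
      (lamU m w v = lamU m w v' ∧ v.1 = v'.1 ∧ tM m v < tM m v')

/-- the bijection `φ̂_{ℓ₀} : 𝓑 → 𝓒` on the abstract special block;
on `𝓑`, points are `u⁰_ℓ = (0, 3ℓ, -2ℓ)` and `u¹_ℓ = (1, 3ℓ+1, -2ℓ-1)`. -/
def phiHatB (m n l0 : ℤ) (u : V) : V :=
  if u.1 = 0 then
    if u.2.1 / 3 < l0 then (0, 3 * (n + u.2.1 / 3 + 1), m - 2 * (n + u.2.1 / 3 + 1))
    else if u.2.1 / 3 = l0 then (1, 3 * (n + l0) + 1, m - 2 * (n + l0) - 1)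
    else (0, 3 * (n + u.2.1 / 3), m - 2 * (n + u.2.1 / 3))
  else
    if (u.2.1 - 1) / 3 < l0 then
      (1, 3 * (n + (u.2.1 - 1) / 3) + 1, m - 2 * (n + (u.2.1 - 1) / 3) - 1)
    else (1, 3 * (n + (u.2.1 - 1) / 3 + 1) + 1, m - 2 * (n + (u.2.1 - 1) / 3 + 1) - 1)

/-- the abstract special block `𝓑`: `u⁰_ℓ = ℓ·e₂` for `0 ≤ ℓ ≤ τ+1`,
`u¹_ℓ = e₁ + ℓ·e₂` for `0 ≤ ℓ ≤ τ` -/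
def BblockF (t : ℕ) : Finset V :=
  ((Finset.range (t + 2)).image fun l : ℕ => ((0 : ℤ), 3 * (l : ℤ), -2 * (l : ℤ))) ∪
    ((Finset.range (t + 1)).image fun l : ℕ => ((1 : ℤ), 3 * (l : ℤ) + 1, -2 * (l : ℤ) - 1))

/-- the abstract special block `𝓒`: `v⁰_ℓ = (0,0,m) + (n+ℓ)·e₂` for `1 ≤ ℓ ≤ τ+1`,
`v¹_ℓ = (0,0,m) + e₁ + (n+ℓ)·e₂` for `0 ≤ ℓ ≤ τ+1` -/
def CblockF (m n t : ℕ) : Finset V :=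
  ((Finset.Icc 1 (t + 1)).image fun l : ℕ =>
      ((0 : ℤ), 3 * ((n : ℤ) + (l : ℤ)), (m : ℤ) - 2 * ((n : ℤ) + (l : ℤ)))) ∪
    ((Finset.range (t + 2)).image fun l : ℕ =>
      ((1 : ℤ), 3 * ((n : ℤ) + (l : ℤ)) + 1, (m : ℤ) - 2 * ((n : ℤ) + (l : ℤ)) - 1))

/-- `δ_{w,n} = δ_w - 6n` -/
def deltaWN (m w n : ℤ) : ℤ := deltaW m w - 6 * n

/-- `n_max = ⌊(6m - 9 - w)/6⌋` -/
def nmaxZ (m w : ℤ) : ℤ := (6 * m - 9 - w) / 6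

/-- the special block `𝓑_n ⊆ 𝓡'_w` -/
def Bblock (m w n : ℤ) : Set V :=
  {u ∈ Rprime m | wtR u = w ∧ (u.1 = deltaWN m w n ∨ u.1 = deltaWN m w n - 1) ∧
    3 * n - 1 + etaZ w ≤ u.2.1}

/-- the special block `𝓒_n ⊆ 𝓜'_w` -/
def Cblock (m w n : ℤ) : Set V :=
  {v ∈ Mprime m | wtM m v = w ∧ (v.1 = deltaWN m w n ∨ v.1 = deltaWN m w n - 1) ∧
    6 * n + 2 ≤ v.2.1}

/-- the corner monomial `u⁰_{n,0} = (δ_{w,n}-1, 3n-1+η(w), c_w)` of `𝓑_n` -/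
def cornerB (m w n : ℤ) : V := (deltaWN m w n - 1, 3 * n - 1 + etaZ w, 2 * (tauW m w + 1))

/-! Every multiplier of `φ̂` is a multiplier of `φ^▭`, so it is some `q_h`; hence `φ̂` keeps the
first coordinate and with it `λ`. Let `x_u` and `y_u = 3λ(u)` be the second coordinates of the
multipliers of `φ̂` and `φ^▭` at `u`. Equality of the multisets gives `∑ x_u² = ∑ y_u²`, and since
both maps are bijections `𝓡^▭_w → 𝓜^▭_w` preserving `λ`, reindexing over `𝓜^▭_w` gives
`∑ y_u x_u = ∑ y_u²`. So `∑ (x_u - y_u)² = 0`, and a multiplier `q_h` is determined by `3h`. -/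

theorem Finset.eqOn_of_sum_sq_eq_of_sum_mul_eq {ι R : Type*} [CommRing R] [LinearOrder R]
    [IsStrictOrderedRing R] {s : Finset ι} {x y : ι → R}
    (hsq : ∑ i ∈ s, x i ^ 2 = ∑ i ∈ s, y i ^ 2)
    (hmul : ∑ i ∈ s, y i * x i = ∑ i ∈ s, y i ^ 2) : Set.EqOn x y s := by
  have hzero : ∑ i ∈ s, (x i - y i) ^ 2 = 0 := by
    calc ∑ i ∈ s, (x i - y i) ^ 2
        = ∑ i ∈ s, x i ^ 2 - 2 * ∑ i ∈ s, y i * x i + ∑ i ∈ s, y i ^ 2 := by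
          rw [mul_sum, ← sum_sub_distrib, ← sum_add_distrib]
          exact sum_congr rfl fun i _ => by ring
      _ = 0 := by rw [hsq, hmul]; ring
  intro i hi
  have := (sum_eq_zero_iff_of_nonneg fun j _ => sq_nonneg (x j - y j)).mp hzero i hi
  exact sub_eq_zero.mp (pow_eq_zero_iff two_ne_zero |>.mp this)

theorem Finset.sum_mul_sub_eq_of_bijOn {α R : Type*} [CommRing R] {s t : Finset α} {f g : α → α}
    (hf : Set.BijOn f s t) (hg : Set.BijOn g s t) (κ c : α → R)
    (hκf : ∀ u ∈ s, κ (f u) = κ u) (hκg : ∀ u ∈ s, κ (g u) = κ u) :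
    ∑ u ∈ s, κ u * (c (f u) - c u) = ∑ u ∈ s, κ u * (c (g u) - c u) := by
  have hsum : ∀ φ : α → α, Set.BijOn φ s t → (∀ u ∈ s, κ (φ u) = κ u) →
      ∑ u ∈ s, κ u * c (φ u) = ∑ v ∈ t, κ v * c v := fun φ hφ hκ =>
    sum_nbij φ hφ.mapsTo hφ.injOn hφ.surjOn fun u hu => by rw [hκ u hu]
  simp only [mul_sub, sum_sub_distrib, hsum f hf hκf, hsum g hg hκg]

lemma lamZ_spec (n : ℤ) :
    n = 6 * lamZ n + rhoZ n ∧
      (rhoZ n = -6 ∨ rhoZ n = -4 ∨ rhoZ n = -3 ∨ rhoZ n = -2 ∨ rhoZ n = -1 ∨ rhoZ n = 1) := by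
  unfold lamZ rhoZ
  split_ifs <;> omega

lemma mem_RrectWF_iff {m w : ℤ} {u : V} :
    u ∈ RrectWF m w ↔
      0 ≤ u.1 ∧ u.1 ≤ w ∧ 0 ≤ u.2.1 ∧ u.2.1 ≤ w ∧ 0 ≤ u.2.2 ∧ u.2.2 ≤ w ∧
        2 * u.1 + 2 * u.2.1 + 3 * u.2.2 ≤ 6 * m - 9 ∧
        u.1 + 2 * u.2.1 + 3 * u.2.2 = w ∧ u.2.2 / 2 ≤ w / 3 - (m - 1) := by
  simp only [RrectWF, RprimeWF, boxF, Finset.mem_filter, Finset.mem_product, Finset.mem_Icc]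
  simp only [wtR, tR, tauW]
  tauto

lemma mem_MrectWF_iff {m w : ℤ} {v : V} :
    v ∈ MrectWF m w ↔
      0 ≤ v.1 ∧ v.1 ≤ w + 3 * m ∧ 0 ≤ v.2.1 ∧ v.2.1 ≤ w + 3 * m ∧ 0 ≤ v.2.2 ∧
        v.2.2 ≤ w + 3 * m ∧
        2 * v.1 + 2 * v.2.1 + 3 * v.2.2 ≤ 9 * (m - 1) ∧ v.1 + v.2.1 ≤ 3 * (m - 1) ∧
        3 * m - 2 ≤ v.1 + v.2.1 + v.2.2 ∧ v.1 + 2 * v.2.1 + 3 * v.2.2 - 3 * m = w ∧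
        (3 * (m - 1) - v.1 - v.2.1) / 3 ≤ w / 3 - (m - 1) := by
  simp only [MrectWF, MprimeWF, boxF, Finset.mem_filter, Finset.mem_product, Finset.mem_Icc]
  simp only [wtM, tM, tauW]
  tauto

lemma wtR_of_mem_RrectWF {m w : ℤ} {u : V} (hu : u ∈ RrectWF m w) : wtR u = w :=
  (mem_RrectWF_iff.mp hu).2.2.2.2.2.2.2.1

lemma fst_qvec (m h : ℤ) : (qvec m h).1 = 0 := rfl

lemma snd_fst_qvec (m h : ℤ) : (qvec m h).2.1 = 3 * h := rfl

lemma lamU_add_qvec (m w m' h : ℤ) (u : V) : lamU m w (u + qvec m' h) = lamU m w u := by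
  rw [lamU, lamU, Prod.fst_add, fst_qvec, add_zero]

lemma phiRect_eq_add {m w : ℤ} {u : V} (hu : u ∈ RrectWF m w) :
    phiRect m u = u + qvec m (lamU m w u) := by
  rw [phiRect, wtR_of_mem_RrectWF hu, lamU]

lemma phiRect_mapsTo (m w : ℤ) : Set.MapsTo (phiRect m) (RrectWF m w) (MrectWF m w) := by
  intro u hu
  rw [mem_coe, mem_RrectWF_iff] at hu
  rw [mem_coe, mem_MrectWF_iff]
  obtain ⟨hl, hr⟩ := lamZ_spec (deltaW m (wtR u) - u.1)
  simp only [phiRect, qvec, wtR, deltaW, Prod.fst_add, Prod.snd_add] at hl hr ⊢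
  rcases hr with h | h | h | h | h | h <;> omega

lemma phiRect_injOn (m w : ℤ) : Set.InjOn (phiRect m) (RrectWF m w) := by
  intro u hu u' hu' he
  rw [phiRect_eq_add hu, phiRect_eq_add hu'] at he
  have hfst : u.1 = u'.1 := by
    simpa only [Prod.fst_add, fst_qvec, add_zero] using congrArg Prod.fst he
  rw [lamU, lamU, hfst] at he
  exact add_right_cancel he

lemma phiRect_surjOn (m w : ℤ) : Set.SurjOn (phiRect m) (RrectWF m w) (MrectWF m w) := by
  intro v hv
  rw [mem_coe, mem_MrectWF_iff] at hv
  obtain ⟨hl, hr⟩ := lamZ_spec (deltaW m w - v.1)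
  have hu : v - qvec m (lamU m w v) ∈ RrectWF m w := by
    rw [mem_RrectWF_iff]
    simp only [qvec, lamU, deltaW, Prod.fst_sub, Prod.snd_sub] at hl hr ⊢
    rcases hr with h | h | h | h | h | h <;> omega
  have hlam : lamU m w (v - qvec m (lamU m w v)) = lamU m w v := by
    rw [lamU, lamU, Prod.fst_sub, fst_qvec, sub_zero]
  exact ⟨_, hu, by rw [phiRect_eq_add hu, hlam, sub_add_cancel]⟩

theorem phiRect_bijOn (m w : ℤ) : Set.BijOn (phiRect m) (RrectWF m w) (MrectWF m w) :=
  ⟨phiRect_mapsTo m w, phiRect_injOn m w, phiRect_surjOn m w⟩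

lemma snd_phiRect_sub_self {m w : ℤ} {u : V} (hu : u ∈ RrectWF m w) :
    (phiRect m u - u).2.1 = 3 * lamU m w u := by
  rw [phiRect_eq_add hu, add_sub_cancel_left, snd_fst_qvec]

lemma exists_eq_add_qvec_of_multipliers_eq {m w : ℤ} {f : V → V}
    (hmult : (RrectWF m w).val.map (fun u => f u - u) =
      (RrectWF m w).val.map (fun u => phiRect m u - u)) :
    ∀ u ∈ RrectWF m w, ∃ h, f u = u + qvec m h := by
  intro u hu
  obtain ⟨u', hu', he⟩ := Multiset.mem_map.mp (hmult ▸ Multiset.mem_map_of_mem _ hu)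
  rw [phiRect_eq_add hu', add_sub_cancel_left] at he
  exact ⟨_, eq_add_of_sub_eq' he.symm⟩

lemma sum_snd_phiRect_sub_mul_eq {m w : ℤ} {f : V → V}
    (hf : Set.BijOn f (RrectWF m w) (MrectWF m w))
    (hq : ∀ u ∈ RrectWF m w, ∃ h, f u = u + qvec m h) :
    ∑ u ∈ RrectWF m w, (phiRect m u - u).2.1 * (f u - u).2.1 =
      ∑ u ∈ RrectWF m w, (phiRect m u - u).2.1 ^ 2 := by
  calc _ = ∑ u ∈ RrectWF m w, 3 * lamU m w u * ((f u).2.1 - u.2.1) :=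
        sum_congr rfl fun u hu => by rw [snd_phiRect_sub_self hu]; rfl
    _ = ∑ u ∈ RrectWF m w, 3 * lamU m w u * ((phiRect m u).2.1 - u.2.1) := by
        refine Finset.sum_mul_sub_eq_of_bijOn hf (phiRect_bijOn m w) _ (fun v => v.2.1) ?_ ?_
        · intro u hu
          obtain ⟨h, hh⟩ := hq u hu
          rw [hh, lamU_add_qvec]
        · intro u hu
          rw [phiRect_eq_add hu, lamU_add_qvec]
    _ = _ := sum_congr rfl fun u hu => by rw [sq, ← snd_phiRect_sub_self hu]; rfl

theorem phiRect_uniqueness_general (m w : ℤ) (φh : V → V)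
    (hbij : Set.BijOn φh (RrectWF m w : Set V) (MrectWF m w : Set V))
    (hmult : (RrectWF m w).val.map (fun u => φh u - u) =
      (RrectWF m w).val.map (fun u => phiRect m u - u)) :
    ∀ u ∈ RrectWF m w, φh u = phiRect m u := by
  have hq := exists_eq_add_qvec_of_multipliers_eq hmult
  have hsq : ∑ u ∈ RrectWF m w, (φh u - u).2.1 ^ 2 =
      ∑ u ∈ RrectWF m w, (phiRect m u - u).2.1 ^ 2 := by
    have := congrArg (fun s => (s.map fun d : V => d.2.1 ^ 2).sum) hmult
    simpa only [Multiset.map_map, Function.comp_def, Finset.sum_map_val] using this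
  intro u hu
  have hsnd : (φh u - u).2.1 = (phiRect m u - u).2.1 :=
    Finset.eqOn_of_sum_sq_eq_of_sum_mul_eq hsq (sum_snd_phiRect_sub_mul_eq hbij hq) hu
  obtain ⟨h, hh⟩ := hq u hu
  rw [snd_phiRect_sub_self hu, hh, add_sub_cancel_left, snd_fst_qvec] at hsnd
  rw [hh, phiRect_eq_add hu, show h = lamU m w u by omega]

/-- **Statement 10 (Corollary `unirectangle2`): uniqueness of `φ^▭`.** Any bijection
`𝓡^▭_w → 𝓜^▭_w` with the same multiset of multipliers as `φ^▭` equals `φ^▭`. -/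
theorem phiRect_uniqueness (m w : ℤ) (hm : 2 ≤ m) (hw1 : 3 * (m - 1) ≤ w)
    (hw2 : w ≤ 6 * m - 9) (φh : V → V)
    (hbij : Set.BijOn φh (RrectWF m w : Set V) (MrectWF m w : Set V))
    (hmult : (RrectWF m w).val.map (fun u => φh u - u) =
      (RrectWF m w).val.map (fun u => phiRect m u - u)) :
    ∀ u ∈ RrectWF m w, φh u = phiRect m u :=
  phiRect_uniqueness_general m w φh hbij hmult
end

section
/- Fix an integer m ≥ 2. The bijection φ^△ : 𝓡^T → 𝓜^T maps 𝓡^△ onto 𝓜^△. More precisely, for each integer w ≡ 2 mod 3 let u_w = (6m−8−w, 0, (2w−6m+8)/3) and v_w = (6m−8−w, 0, (2w−3m+8)/3); then 𝓡^T ∖ 𝓡^△ = {u_w : 3m−4 ≤ w ≤ 6m−10, w ≡ 2 mod 3}, 𝓜^T ∖ 𝓜^△ = {v_w : 3m−4 ≤ w ≤ 6m−10, w ≡ 2 mod 3}, and φ^△(u_w) = v_w = u_w + (0,0,m) for every such w. -/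
open Finset

def uwPt (m w : ℤ) : V := (6 * m - 8 - w, 0, (2 * w - 6 * m + 8) / 3)

def vwPt (m w : ℤ) : V := (6 * m - 8 - w, 0, (2 * w - 3 * m + 8) / 3)

/-!
`φ^△ = v^△ ∘ (u^△)⁻¹` is a bijection `𝓡^T → 𝓜^T` because `u^△` and `v^△` are bijections out of
`𝓓^T`, with explicit inverses `(a,b,c) ↦ (wt u, b, ⌊a/3⌋)` and
`(i,j,k) ↦ (wt v, ⌊j/2⌋, i+j+k-3m+2)`. For a point of `𝓡^T` outside `𝓡'`, the two inequalities
`⌊c/2⌋ ≥ τ_w + 1` and `2a+2b+3c ≥ 6m-8` leave no room: `b = 0` and the point is `u_w`; likewise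
the points of `𝓜^T` outside `𝓜'` are the `v_w`. As `φ^△(u_w) = v_w`, the bijection
`𝓡^T → 𝓜^T` maps `𝓡^T ∖ 𝓡^△` onto `𝓜^T ∖ 𝓜^△`, so it restricts to a bijection `𝓡^△ → 𝓜^△`.
-/

namespace Set

variable {α β : Type*} {f : α → β} {s s' : Set α} {t t' : Set β}

theorem BijOn.of_image_sdiff (h : BijOn f s t) (hs : s' ⊆ s) (ht : t' ⊆ t)
    (hd : f '' (s \ s') = t \ t') : BijOn f s' t' := by
  have himage : f '' s' = t' := by
    rw [← sdiff_sdiff_cancel_left hs, h.injOn.image_sdiff_subset sdiff_subset, h.image_eq, hd,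
      sdiff_sdiff_cancel_left ht]
  exact himage ▸ h.subset_left hs

end Set

def uTriInv (u : V) : V := (wtR u, u.2.1, u.1 / 3)

def vTriInv (m : ℤ) (v : V) : V := (wtM m v, v.2.1 / 2, v.1 + v.2.1 + v.2.2 - 3 * m + 2)

theorem uTriInv_uTri (d : V) : uTriInv (uTri d) = d := by
  obtain ⟨w, r, s⟩ := d
  simp only [uTri, uTriInv, wtR, etaZ, Prod.mk.injEq, true_and]
  omega

theorem uTri_uTriInv (u : V) : uTri (uTriInv u) = u := by
  obtain ⟨a, b, c⟩ := u
  simp only [uTri, uTriInv, wtR, etaZ, Prod.mk.injEq, true_and]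
  omega

theorem vTriInv_vTri (m : ℤ) (d : V) : vTriInv m (vTri m d) = d := by
  obtain ⟨w, r, s⟩ := d
  simp only [vTri, vTriInv, wtM, epsZ, Prod.mk.injEq]
  omega

theorem vTri_vTriInv (m : ℤ) (v : V) : vTri m (vTriInv m v) = v := by
  obtain ⟨i, j, k⟩ := v
  simp only [vTri, vTriInv, wtM, epsZ, Prod.mk.injEq]
  omega

theorem uTri_mem_RText {m : ℤ} {d : V} (hd : d ∈ DText m) : uTri d ∈ RText m := by
  obtain ⟨w, r, s⟩ := d
  simp only [RText, DText, Dall, uTri, nonnegV, tR, tD, tauW, wtR, etaZ,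
    Set.mem_ofPred_eq] at hd ⊢
  omega

theorem uTriInv_mem_DText {m : ℤ} {u : V} (hu : u ∈ RText m) : uTriInv u ∈ DText m := by
  obtain ⟨a, b, c⟩ := u
  simp only [RText, DText, Dall, uTriInv, nonnegV, tR, tD, tauW, wtR, Set.mem_ofPred_eq] at hu ⊢
  omega

theorem vTri_mem_MText {m : ℤ} {d : V} (hd : d ∈ DText m) : vTri m d ∈ MText m := by
  obtain ⟨w, r, s⟩ := d
  simp only [MText, Mfull, DText, Dall, vTri, nonnegV, tM, tD, tauW, wtM, epsZ,
    Set.mem_ofPred_eq] at hd ⊢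
  omega

theorem vTriInv_mem_DText {m : ℤ} {v : V} (hv : v ∈ MText m) : vTriInv m v ∈ DText m := by
  obtain ⟨i, j, k⟩ := v
  simp only [MText, Mfull, DText, Dall, vTriInv, nonnegV, tM, tD, tauW, wtM,
    Set.mem_ofPred_eq] at hv ⊢
  omega

theorem bijOn_uTriInv (m : ℤ) : Set.BijOn uTriInv (RText m) (DText m) :=
  Set.InvOn.bijOn ⟨fun u _ => uTri_uTriInv u, fun d _ => uTriInv_uTri d⟩
    (fun _ => uTriInv_mem_DText) (fun _ => uTri_mem_RText)

theorem bijOn_vTri (m : ℤ) : Set.BijOn (vTri m) (DText m) (MText m) :=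
  Set.InvOn.bijOn ⟨fun d _ => vTriInv_vTri m d, fun v _ => vTri_vTriInv m v⟩
    (fun _ => vTri_mem_MText) (fun _ => vTriInv_mem_DText)

theorem bijOn_phiTri_RText_MText (m : ℤ) : Set.BijOn (phiTri m) (RText m) (MText m) :=
  (bijOn_vTri m).comp (bijOn_uTriInv m)

theorem Rtri_subset_RText (m : ℤ) : Rtri m ⊆ RText m :=
  fun _ ⟨⟨hnonneg, _⟩, ht⟩ => ⟨hnonneg, ht⟩

theorem Mtri_subset_MText (m : ℤ) : Mtri m ⊆ MText m :=
  fun _ ⟨⟨hnonneg, _, hle, hge⟩, ht⟩ => ⟨⟨hnonneg, hle, hge⟩, ht⟩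

theorem RText_diff_Rtri (m : ℤ) :
    RText m \ Rtri m =
      {u | ∃ w : ℤ, 3 * m - 4 ≤ w ∧ w ≤ 6 * m - 10 ∧ w % 3 = 2 ∧ u = uwPt m w} := by
  ext ⟨a, b, c⟩
  simp only [Set.mem_sdiff, RText, Rtri, Rprime, nonnegV, tR, tauW, wtR, uwPt,
    Set.mem_ofPred_eq, Prod.mk.injEq]
  constructor
  · rintro ⟨hT, hnot⟩
    exact ⟨a + 2 * b + 3 * c, by omega⟩
  · rintro ⟨w, hlo, hhi, hw, rfl, rfl, rfl⟩
    omega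

theorem MText_diff_Mtri (m : ℤ) :
    MText m \ Mtri m =
      {v | ∃ w : ℤ, 3 * m - 4 ≤ w ∧ w ≤ 6 * m - 10 ∧ w % 3 = 2 ∧ v = vwPt m w} := by
  ext ⟨i, j, k⟩
  simp only [Set.mem_sdiff, MText, Mfull, Mtri, Mprime, nonnegV, tM, tauW, wtM, vwPt,
    Set.mem_ofPred_eq, Prod.mk.injEq]
  constructor
  · rintro ⟨hT, hnot⟩
    exact ⟨i + 2 * j + 3 * k - 3 * m, by omega⟩
  · rintro ⟨w, hlo, hhi, hw, rfl, rfl, rfl⟩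
    omega

theorem phiTri_uwPt {m w : ℤ} (hw : w % 3 = 2) : phiTri m (uwPt m w) = vwPt m w := by
  simp only [phiTri, vTri, wtR, uwPt, vwPt, epsZ, Prod.mk.injEq]
  omega

theorem vwPt_eq_uwPt_add {m w : ℤ} (hw : w % 3 = 2) :
    vwPt m w = uwPt m w + ((0 : ℤ), (0 : ℤ), m) := by
  simp only [uwPt, vwPt, Prod.mk_add_mk, Prod.mk.injEq]
  omega

theorem image_phiTri_RText_diff_Rtri (m : ℤ) :
    phiTri m '' (RText m \ Rtri m) = MText m \ Mtri m := by
  rw [RText_diff_Rtri, MText_diff_Mtri]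
  ext v
  simp only [Set.mem_image, Set.mem_ofPred_eq]
  constructor
  · rintro ⟨_, ⟨w, hlo, hhi, hw, rfl⟩, rfl⟩
    exact ⟨w, hlo, hhi, hw, phiTri_uwPt hw⟩
  · rintro ⟨w, hlo, hhi, hw, rfl⟩
    exact ⟨uwPt m w, ⟨w, hlo, hhi, hw, rfl⟩, phiTri_uwPt hw⟩

theorem phiTri_triangles_general (m : ℤ) :
    (∀ d ∈ DText m, phiTri m (uTri d) = vTri m d) ∧
    Set.BijOn (phiTri m) (RText m) (MText m) ∧
    Set.BijOn (phiTri m) (Rtri m) (Mtri m) ∧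
    RText m \ Rtri m =
      {u | ∃ w : ℤ, 3 * m - 4 ≤ w ∧ w ≤ 6 * m - 10 ∧ w % 3 = 2 ∧ u = uwPt m w} ∧
    MText m \ Mtri m =
      {v | ∃ w : ℤ, 3 * m - 4 ≤ w ∧ w ≤ 6 * m - 10 ∧ w % 3 = 2 ∧ v = vwPt m w} ∧
    ∀ w : ℤ, 3 * m - 4 ≤ w → w ≤ 6 * m - 10 → w % 3 = 2 →
      phiTri m (uwPt m w) = vwPt m w ∧ vwPt m w = uwPt m w + ((0 : ℤ), (0 : ℤ), m) := by
  refine ⟨fun d _ => congrArg (vTri m) (uTriInv_uTri d), bijOn_phiTri_RText_MText m, ?_,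
    RText_diff_Rtri m, MText_diff_Mtri m, fun w _ _ hw => ⟨phiTri_uwPt hw, vwPt_eq_uwPt_add hw⟩⟩
  exact (bijOn_phiTri_RText_MText m).of_image_sdiff (Rtri_subset_RText m) (Mtri_subset_MText m)
    (image_phiTri_RText_diff_Rtri m)

/-- **Corollary `phitriangles`.** `φ^△` maps `𝓡^△` onto `𝓜^△`, and the
complements `𝓡^T ∖ 𝓡^△`, `𝓜^T ∖ 𝓜^△` consist exactly of the monomials `u_w`, `v_w`
for `3m-4 ≤ w ≤ 6m-10`, `w ≡ 2 (mod 3)`, with `φ^△(u_w) = v_w = u_w + (0,0,m)`. -/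
theorem phiTri_triangles (m : ℤ) (hm : 2 ≤ m) :
    (∀ d ∈ DText m, phiTri m (uTri d) = vTri m d) ∧
    Set.BijOn (phiTri m) (RText m) (MText m) ∧
    Set.BijOn (phiTri m) (Rtri m) (Mtri m) ∧
    RText m \ Rtri m =
      {u | ∃ w : ℤ, 3 * m - 4 ≤ w ∧ w ≤ 6 * m - 10 ∧ w % 3 = 2 ∧ u = uwPt m w} ∧
    MText m \ Mtri m =
      {v | ∃ w : ℤ, 3 * m - 4 ≤ w ∧ w ≤ 6 * m - 10 ∧ w % 3 = 2 ∧ v = vwPt m w} ∧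
    ∀ w : ℤ, 3 * m - 4 ≤ w → w ≤ 6 * m - 10 → w % 3 = 2 →
      phiTri m (uwPt m w) = vwPt m w ∧ vwPt m w = uwPt m w + ((0 : ℤ), (0 : ℤ), m) :=
  phiTri_triangles_general m
end
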